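/- Let n ≥ 1 be an integer and δ ∈ (n, n+1). Then u_n(δ) < (n+1-δ)δ/(δ-n) - ln(δ-n). -/

import Mathlib

open Real Finset

/-- Degree-(n-1) Taylor polynomial of `exp(-u)` at 0. -/
noncomputable def A (n : ℕ) (u : ℝ) : ℝ :=
  ∑ k ∈ Finset.range n, (-1 : ℝ) ^ k * u ^ k / (Nat.factorial k)

lemma A_succ (n : ℕ) (u : ℝ) : A (n+1) u = A n u + (-1:ℝ)^n * u^n / (Nat.factorial n) :=
  Finset.sum_range_succ _ _

lemma A_zero (m : ℕ) (hm : 1 ≤ m) : A m 0 = 1 := by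
  unfold A
  rw [Finset.sum_eq_single 0]
  · simp
  · intro k hk hk0; simp [zero_pow hk0]
  · intro h0; simp at h0; omega

lemma hasDerivAt_A (m : ℕ) (u : ℝ) : HasDerivAt (fun v => A (m+1) v) (-(A m u)) u := by
  have h : ∀ k ∈ Finset.range (m+1),
      HasDerivAt (fun v : ℝ => (-1:ℝ)^k * v^k / (Nat.factorial k))
        ((-1:ℝ)^k * (k * u^(k-1)) / (Nat.factorial k)) u := by
    intro k _
    have := (hasDerivAt_pow k u).const_mul ((-1:ℝ)^k)
    simpa [mul_comm, mul_assoc, div_eq_mul_inv, mul_left_comm] using this.div_const (Nat.factorial k)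
  have hsum := HasDerivAt.sum h
  have he : (∑ k ∈ Finset.range (m+1), (-1:ℝ)^k * (k * u^(k-1)) / (Nat.factorial k)) = -(A m u) := by
    rw [Finset.sum_range_succ']
    unfold A
    rw [← Finset.sum_neg_distrib]
    have : ∀ j ∈ Finset.range m, (-1:ℝ)^(j+1) * ((j+1 : ℕ) * u^(j+1-1)) / (Nat.factorial (j+1))
        = -((-1:ℝ)^j * u^j / (Nat.factorial j)) := by
      intro j _
      rw [pow_succ, Nat.factorial_succ, Nat.add_sub_cancel]
      push_cast
      have h1 : ((j:ℝ)+1) ≠ 0 := by positivity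
      have h2 : ((Nat.factorial j : ℝ)) ≠ 0 := by positivity
      field_simp
    rw [Finset.sum_congr rfl this]
    simp
  rw [he, Finset.sum_fn] at hsum
  exact hsum

noncomputable def J (n : ℕ) (u : ℝ) : ℝ :=
  (-1:ℝ)^(n+1) * (Nat.factorial n) * (Real.exp (-u) - A (n+1) u)

lemma J_zero (n : ℕ) : J n 0 = 0 := by
  unfold J
  rw [A_zero (n+1) (by omega)]
  simp

lemma J_eq (n : ℕ) (u : ℝ) :
    J n u = (-1:ℝ)^(n+1) * (Nat.factorial n) * (Real.exp (-u) - A n u) + u^n := by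
  have h2 : ((Nat.factorial n : ℝ)) ≠ 0 := by positivity
  have hs : ((-1:ℝ)^(n+1)) * ((-1:ℝ)^n) = -1 := by
    rw [← pow_add]; exact Odd.neg_one_pow ⟨n, by ring⟩
  have h3 : (-1:ℝ)^(n+1) * (Nat.factorial n) * ((-1:ℝ)^n * u^n / (Nat.factorial n)) = -u^n := by
    rw [show (-1:ℝ)^(n+1) * (Nat.factorial n) * ((-1:ℝ)^n * u^n / (Nat.factorial n))
        = ((-1:ℝ)^(n+1) * (-1:ℝ)^n) * ((Nat.factorial n) * u^n / (Nat.factorial n)) from by ring,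
      hs, mul_div_cancel_left₀ _ h2]
    ring
  unfold J
  rw [A_succ]
  rw [show (-1:ℝ)^(n+1) * (Nat.factorial n) * (Real.exp (-u) - (A n u + (-1:ℝ)^n * u^n / (Nat.factorial n)))
      = (-1:ℝ)^(n+1) * (Nat.factorial n) * (Real.exp (-u) - A n u)
        - (-1:ℝ)^(n+1) * (Nat.factorial n) * ((-1:ℝ)^n * u^n / (Nat.factorial n)) from by ring, h3]
  ring

lemma hasDerivAt_J (n : ℕ) (u : ℝ) : HasDerivAt (J n) (u^n - J n u) u := by
  have hexp : HasDerivAt (fun v : ℝ => Real.exp (-v)) (-Real.exp (-u)) u := by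
    exact ((Real.hasDerivAt_exp (-u)).comp u (hasDerivAt_neg u)).congr_deriv (by ring)
  have hA := hasDerivAt_A n u
  have h := (hexp.sub hA).const_mul ((-1:ℝ)^(n+1) * (Nat.factorial n))
  have he : ((-1:ℝ)^(n+1) * (Nat.factorial n)) * (-Real.exp (-u) - -(A n u)) = u^n - J n u := by
    rw [J_eq]; ring
  rw [he] at h
  exact h

lemma J_val (n : ℕ) (δ : ℝ) (u₀ : ℝ) (hu₀ : 0 < u₀) (hd : 0 < δ)
    (heq : Real.exp (-u₀) = A n u₀ + (-1 : ℝ) ^ n * δ * u₀ ^ n / (Nat.factorial n * (u₀ + δ))) :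
    J n u₀ = u₀^(n+1) / (u₀ + δ) := by
  have h2 : ((Nat.factorial n : ℝ)) ≠ 0 := by positivity
  have hw : u₀ + δ ≠ 0 := by positivity
  have hs : ((-1:ℝ)^(n+1)) * ((-1:ℝ)^n) = -1 := by
    rw [← pow_add]; exact Odd.neg_one_pow ⟨n, by ring⟩
  rw [J_eq, heq]
  rw [show A n u₀ + (-1 : ℝ) ^ n * δ * u₀ ^ n / (Nat.factorial n * (u₀ + δ)) - A n u₀
      = (-1 : ℝ) ^ n * δ * u₀ ^ n / (Nat.factorial n * (u₀ + δ)) from by ring]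
  rw [show (-1:ℝ)^(n+1) * (Nat.factorial n) * ((-1 : ℝ) ^ n * δ * u₀ ^ n / (Nat.factorial n * (u₀ + δ)))
      = ((-1:ℝ)^(n+1) * (-1:ℝ)^n) * ((Nat.factorial n) * (δ * u₀ ^ n) / (Nat.factorial n * (u₀ + δ))) from by ring,
    hs]
  rw [mul_div_mul_left _ _ h2]
  field_simp
  ring

noncomputable def U (n : ℕ) (t : ℝ) : ℝ := n/t + 1 - n - t - Real.log t

lemma hasDerivAt_U (n : ℕ) (t : ℝ) (ht : 0 < t) :
    HasDerivAt (U n) (-(n/t^2) - 1 - 1/t) t := by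
  have h1 : HasDerivAt (fun t : ℝ => (n:ℝ)/t) (-(n/t^2)) t := by
    have := (hasDerivAt_inv (ne_of_gt ht)).const_mul (n:ℝ)
    refine this.congr_deriv (Eq.symm ?_)
    rw [div_eq_mul_inv]
    ring
  have h2 := Real.hasDerivAt_log (ne_of_gt ht)
  have h := (((h1.add_const 1).sub_const (n:ℝ)).sub (hasDerivAt_id t)).sub h2
  refine h.congr_deriv (Eq.symm ?_)
  field_simp

lemma U_one (n : ℕ) : U n 1 = 0 := by simp [U]

lemma strictAntiOn_U (n : ℕ) : StrictAntiOn (U n) (Set.Ioc 0 1) := by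
  have hcont : ContinuousOn (U n) (Set.Ioc 0 1) := by
    intro t ht
    exact (hasDerivAt_U n t ht.1).continuousAt.continuousWithinAt
  apply strictAntiOn_of_deriv_neg (convex_Ioc 0 1) hcont
  intro t ht
  rw [interior_Ioc] at ht
  have ht0 := ht.1
  rw [(hasDerivAt_U n t ht0).deriv]
  have h1 : 0 < 1/t := by positivity
  have h2 : 0 ≤ (n:ℝ)/t^2 := by positivity
  linarith

lemma U_nonneg (n : ℕ) {t : ℝ} (ht : t ∈ Set.Ioc 0 1) : 0 ≤ U n t := by
  rcases eq_or_lt_of_le ht.2 with h | h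
  · simp [h, U_one]
  · have := strictAntiOn_U n ht (Set.mem_Ioc.2 ⟨one_pos, le_refl 1⟩) h
    rw [U_one] at this
    linarith

lemma U_pos (n : ℕ) {t : ℝ} (ht : t ∈ Set.Ioo 0 1) : 0 < U n t := by
  have := strictAntiOn_U n (Set.mem_Ioc.2 ⟨ht.1, le_of_lt ht.2⟩)
    (Set.mem_Ioc.2 ⟨one_pos, le_refl 1⟩) ht.2
  rw [U_one] at this
  linarith

lemma log_bound {t : ℝ} (ht : t ∈ Set.Ioo 0 1) : 2*(1-t)/(1+t) < -Real.log t := by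
  set g : ℝ → ℝ := fun s => -Real.log s - 2*(1-s)/(1+s) with hg
  have hderiv : ∀ s : ℝ, 0 < s → HasDerivAt g (-(1/s) + 4/(1+s)^2) s := by
    intro s hs
    have hs0 : s ≠ 0 := ne_of_gt hs
    have hs1 : (1:ℝ) + s ≠ 0 := by positivity
    have ha := ((hasDerivAt_id s).const_sub 1).const_mul (2:ℝ)
    have hb := (hasDerivAt_id s).const_add (1:ℝ)
    have h2 := ha.div hb hs1
    have h := (Real.hasDerivAt_log hs0).neg.sub h2
    refine h.congr_deriv (Eq.symm ?_)
    simp only [id]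
    field_simp
    ring
  have hcont : ContinuousOn g (Set.Icc t 1) := fun s hs =>
    (hderiv s (lt_of_lt_of_le ht.1 hs.1)).continuousAt.continuousWithinAt
  have hanti : StrictAntiOn g (Set.Icc t 1) := by
    apply strictAntiOn_of_deriv_neg (convex_Icc t 1) hcont
    intro s hs
    rw [interior_Icc] at hs
    have hs0 : 0 < s := lt_trans ht.1 hs.1
    rw [(hderiv s hs0).deriv]
    have h5 : (0:ℝ) < (1+s)^2 := by positivity
    have h6 : 4/(1+s)^2 < 1/s := by
      rw [div_lt_div_iff₀ h5 hs0]
      have h7 : 0 < 1 - s := by linarith [hs.2]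
      nlinarith [mul_pos h7 h7]
    linarith
  have hg1 : g 1 = 0 := by simp [hg]
  have := hanti (Set.mem_Icc.2 ⟨le_refl t, le_of_lt ht.2⟩)
    (Set.mem_Icc.2 ⟨le_of_lt ht.2, le_refl 1⟩) ht.2
  rw [hg1] at this
  simp only [hg] at this
  linarith


lemma key_ineq (n : ℕ) (hn : 1 ≤ n) {t : ℝ} (ht : t ∈ Set.Ioo 0 1) :
    (1-t)*((n:ℝ)+t) < ((n:ℝ)+t^2) * (-Real.log t) := by
  have ht0 := ht.1
  have ht1 := ht.2
  have hL1 : 1 - t ≤ -Real.log t := by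
    have := Real.log_le_sub_one_of_pos ht0
    linarith
  have hL2 : 2*(1-t)/(1+t) < -Real.log t := log_bound ht
  have hn1 : (1:ℝ) ≤ (n:ℝ) := by exact_mod_cast hn
  -- (n-1) part
  have hpart1 : ((n:ℝ)-1)*(1-t) ≤ ((n:ℝ)-1) * (-Real.log t) := by
    apply mul_le_mul_of_nonneg_left hL1
    linarith
  -- (1+t^2) part : (1+t^2)(-log t) > (1-t)(1+t)
  have hpart2 : (1-t)*(1+t) < (1+t^2) * (-Real.log t) := by
    have h1 : (1-t)*(1+t) ≤ (1+t^2) * (2*(1-t)/(1+t)) := by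
      rw [mul_div_assoc', le_div_iff₀ (by linarith : (0:ℝ) < 1+t)]
      nlinarith [sq_nonneg (1-t), sub_nonneg.2 (le_of_lt ht1)]
    have h2 : (1+t^2) * (2*(1-t)/(1+t)) < (1+t^2) * (-Real.log t) := by
      apply mul_lt_mul_of_pos_left hL2
      positivity
    linarith
  nlinarith [hpart1, hpart2]

-- central algebraic identity for the derivative of F
lemma alg (N t L u v j : ℝ) (ht : t ≠ 0) (hw : u + N + t ≠ 0)
    (hL : L = ((1-t)*(N+t))/t - u) :
    (-(N/t^2) - 1 - 1/t) * (j - u*v / (u + N + t))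
      + ((v - j) * (-(N/t^2) - 1 - 1/t)
        - (((N+1) * v * (-(N/t^2) - 1 - 1/t)) * (u + N + t) - (v*u) * ((-(N/t^2) - 1 - 1/t) + 1))
          / (u + N + t)^2)
    = (v/((u + N + t)^2 * t)) * ((N+t^2)*L + (1-t)*(N+t)) := by
  subst hL
  field_simp
  ring

noncomputable def F (n : ℕ) (t : ℝ) : ℝ :=
  Real.exp (U n t) * (J n (U n t) - (U n t)^(n+1) / (U n t + n + t))

lemma hasDerivAt_F (n : ℕ) {t : ℝ} (ht : t ∈ Set.Ioc 0 1) :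
    HasDerivAt (F n)
      (Real.exp (U n t) * ((U n t)^n / ((U n t + n + t)^2 * t)
        * (((n:ℝ)+t^2)*Real.log t + (1-t)*((n:ℝ)+t)))) t := by
  have ht0 := ht.1
  have hw : U n t + n + t ≠ 0 := by
    have := U_nonneg n ht
    positivity
  have h1 := hasDerivAt_U n t ht0
  set u' : ℝ := -((n:ℝ)/t^2) - 1 - 1/t with hu'
  have hE : HasDerivAt (fun s => Real.exp (U n s)) (Real.exp (U n t) * u') t := h1.exp
  have hJ : HasDerivAt (fun s => J n (U n s)) (((U n t)^n - J n (U n t)) * u') t :=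
    (hasDerivAt_J n (U n t)).comp t h1
  have hpow : HasDerivAt (fun s => (U n s)^(n+1)) ((↑(n+1) : ℝ) * (U n t)^(n+1-1) * u') t :=
    h1.pow (n+1)
  have hden : HasDerivAt (fun s => U n s + n + s) (u' + 1) t := by
    exact (h1.add_const (n:ℝ)).add (hasDerivAt_id t)
  have hdiv := hpow.div hden hw
  have hF := hE.mul (hJ.sub hdiv)
  have hL : Real.log t = ((1-t)*((n:ℝ)+t))/t - U n t := by
    unfold U
    field_simp
    ring
  have halg := alg (n:ℝ) t (Real.log t) (U n t) ((U n t)^n) (J n (U n t)) (ne_of_gt ht0) hw hL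
  refine hF.congr_deriv (Eq.symm ?_)
  rw [← halg]
  simp only [Nat.add_sub_cancel]
  push_cast
  simp only [Pi.sub_apply, Pi.div_apply, hu']
  ring

lemma deriv_F_neg (n : ℕ) (hn : 1 ≤ n) {t : ℝ} (ht : t ∈ Set.Ioo 0 1) :
    deriv (F n) t < 0 := by
  have htc : t ∈ Set.Ioc 0 1 := ⟨ht.1, le_of_lt ht.2⟩
  rw [(hasDerivAt_F n htc).deriv]
  have hupos := U_pos n ht
  have hK : ((n:ℝ)+t^2)*Real.log t + (1-t)*((n:ℝ)+t) < 0 := by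
    have := key_ineq n hn ht
    nlinarith
  have hfac : 0 < Real.exp (U n t) * ((U n t)^n / ((U n t + n + t)^2 * t)) := by
    have h1 : (0:ℝ) < (U n t + n + t)^2 * t := by
      have hc : (0:ℝ) ≤ n := Nat.cast_nonneg n
      have h3 : (0:ℝ) < U n t + n + t := by linarith [ht.1]
      exact mul_pos (pow_pos h3 2) ht.1
    exact mul_pos (Real.exp_pos _) (div_pos (pow_pos hupos n) h1)
  calc Real.exp (U n t) * ((U n t)^n / ((U n t + n + t)^2 * t)
        * (((n:ℝ)+t^2)*Real.log t + (1-t)*((n:ℝ)+t)))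
      = (Real.exp (U n t) * ((U n t)^n / ((U n t + n + t)^2 * t)))
        * (((n:ℝ)+t^2)*Real.log t + (1-t)*((n:ℝ)+t)) := by ring
    _ < 0 := mul_neg_of_pos_of_neg hfac hK

lemma F_one (n : ℕ) : F n 1 = 0 := by
  unfold F
  rw [U_one, J_zero]
  simp

lemma F_pos (n : ℕ) (hn : 1 ≤ n) {t : ℝ} (ht : t ∈ Set.Ioo 0 1) : 0 < F n t := by
  have hcont : ContinuousOn (F n) (Set.Icc t 1) := by
    intro s hs
    have hs' : s ∈ Set.Ioc 0 1 := ⟨lt_of_lt_of_le ht.1 hs.1, hs.2⟩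
    exact (hasDerivAt_F n hs').continuousAt.continuousWithinAt
  have hanti : StrictAntiOn (F n) (Set.Icc t 1) := by
    apply strictAntiOn_of_deriv_neg (convex_Icc t 1) hcont
    intro s hs
    rw [interior_Icc] at hs
    exact deriv_F_neg n hn ⟨lt_trans ht.1 hs.1, hs.2⟩
  have := hanti (Set.mem_Icc.2 ⟨le_refl t, le_of_lt ht.2⟩)
    (Set.mem_Icc.2 ⟨le_of_lt ht.2, le_refl 1⟩) ht.2
  rw [F_one] at this
  linarith

theorem stmt17 (n : ℕ) (hn : 1 ≤ n) (δ : ℝ) (hδ : δ ∈ Set.Ioo (n : ℝ) ((n : ℝ) + 1))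
    (u₀ : ℝ) (hu₀ : 0 < u₀)
    (heq : Real.exp (-u₀) = A n u₀ + (-1 : ℝ) ^ n * δ * u₀ ^ n / (Nat.factorial n * (u₀ + δ))) :
    u₀ < ((n : ℝ) + 1 - δ) * δ / (δ - n) - Real.log (δ - n) := by
  have hn1 : (1:ℝ) ≤ (n:ℝ) := by exact_mod_cast hn
  have hd : 0 < δ := lt_trans (by linarith) hδ.1
  have hx0 : 0 < δ - (n:ℝ) := by linarith [hδ.1]
  have hx1 : δ - (n:ℝ) < 1 := by linarith [hδ.2]
  have hJval := J_val n δ u₀ hu₀ hd heq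
  -- find t₀ with U n t₀ = u₀
  set ε : ℝ := n / (u₀ + n + 1) with hε
  have hε0 : 0 < ε := by
    apply div_pos (by linarith) (by linarith)
  have hε1 : ε < 1 := by
    rw [hε, div_lt_one (by linarith)]
    linarith
  have hUε : u₀ < U n ε := by
    have hne : u₀ + (n:ℝ) + 1 ≠ 0 := by linarith
    have h1 : (n:ℝ)/ε = u₀ + n + 1 := by
      rw [hε]
      field_simp
    have h2 : Real.log ε < 0 := Real.log_neg hε0 hε1
    unfold U
    rw [h1]
    linarith
  have hcontU : ContinuousOn (U n) (Set.Icc ε 1) := fun s hs =>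
    (hasDerivAt_U n s (lt_of_lt_of_le hε0 hs.1)).continuousAt.continuousWithinAt
  have hIVT := intermediate_value_Icc' (le_of_lt hε1) hcontU
  have hu₀mem : u₀ ∈ Set.Icc (U n 1) (U n ε) := by
    rw [U_one]
    exact ⟨le_of_lt hu₀, le_of_lt hUε⟩
  obtain ⟨t₀, ht₀mem, ht₀⟩ := hIVT hu₀mem
  have ht₀0 : 0 < t₀ := lt_of_lt_of_le hε0 ht₀mem.1
  have ht₀1 : t₀ < 1 := by
    rcases lt_or_eq_of_le ht₀mem.2 with h | h
    · exact h
    · exfalso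
      rw [h, U_one] at ht₀
      linarith
  have ht₀Ioo : t₀ ∈ Set.Ioo (0:ℝ) 1 := ⟨ht₀0, ht₀1⟩
  -- F t₀ > 0 gives J n u₀ > u₀^(n+1)/(u₀+n+t₀)
  have hF := F_pos n hn ht₀Ioo
  unfold F at hF
  rw [ht₀] at hF
  have hJgt : u₀^(n+1) / (u₀ + n + t₀) < J n u₀ := by
    rcases mul_pos_iff.mp hF with ⟨_, h⟩ | ⟨h, _⟩
    · linarith
    · exact absurd h (not_lt.2 (le_of_lt (Real.exp_pos u₀)))
  rw [hJval] at hJgt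
  -- compare denominators
  have hP : 0 < u₀^(n+1) := pow_pos hu₀ (n+1)
  have hw1 : 0 < u₀ + (n:ℝ) + t₀ := by linarith
  have hw2 : 0 < u₀ + δ := by linarith
  have hden : u₀ + δ < u₀ + n + t₀ := by
    rw [div_lt_div_iff₀ hw1 hw2] at hJgt
    nlinarith
  have hxt : δ - (n:ℝ) < t₀ := by linarith
  -- conclude via anti-monotonicity of U
  have hlt := strictAntiOn_U n (Set.mem_Ioc.2 ⟨hx0, by linarith⟩)
    (Set.mem_Ioc.2 ⟨ht₀0, le_of_lt ht₀1⟩) hxt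
  rw [ht₀] at hlt
  have hUx : U n (δ - n) = ((n : ℝ) + 1 - δ) * δ / (δ - n) - Real.log (δ - n) := by
    unfold U
    have : δ - (n:ℝ) ≠ 0 := ne_of_gt hx0
    field_simp
    ring
  rw [hUx] at hlt
  exact hlt
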